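/- For any tensor network on a finite graph G with edge capacities a (dimensions of Hilbert spaces), the quantum max-flow is at most the quantum min-cut: QMF(G,a) ≤ QMC(G,a). -/
import Mathlib


open scoped Classical BigOperators

/-- A tensor network: a finite undirected graph with edge set `E`, vertex set `V`,
incidence `ends`, edge capacities `a` (Hilbert space `ℂ^{a e}` on edge `e`), and
distinguished disjoint sets of open input edges `Sedges` and output edges `Tedges`. -/
structure TensorNetwork where
  V : Type
  E : Type
  [fV : Fintype V]
  [fE : Fintype E]
  a : E → ℕ
  a_pos : ∀ e, 0 < a e
  ends : E → Finset V
  Sedges : Finset E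
  Tedges : Finset E
  hdisj : Disjoint Sedges Tedges

attribute [instance] TensorNetwork.fV TensorNetwork.fE

namespace TensorNetwork

variable (N : TensorNetwork)

/-- An assignment of an index to every edge. -/
def Assignment := ∀ e : N.E, Fin (N.a e)

noncomputable instance : Fintype N.Assignment := by unfold Assignment; infer_instance

/-- A tensor assignment associates to each vertex a tensor; `IsLocal` says the tensor at a
vertex depends only on the indices of edges incident to that vertex. -/
def IsLocal (T : N.V → N.Assignment → ℂ) : Prop :=
  ∀ v x y, (∀ e, v ∈ N.ends e → x e = y e) → T v x = T v y

/-- Input indices: an index for every input open edge. -/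
def SIx := ∀ e : N.Sedges, Fin (N.a e)

/-- Output indices: an index for every output open edge. -/
def TIx := ∀ e : N.Tedges, Fin (N.a e)

noncomputable instance : Fintype N.SIx := by unfold SIx; infer_instance
noncomputable instance : Fintype N.TIx := by unfold TIx; infer_instance

/-- The contraction of the tensor network: the matrix of the linear map
`β(G,a;T) : V_S → V_T`, obtained by summing over all internal index assignments
the product of the tensor entries. -/
noncomputable def contr (T : N.V → N.Assignment → ℂ) : Matrix N.SIx N.TIx ℂ :=
  fun i j => ∑ x : N.Assignment,
    if (∀ e : N.Sedges, x e.1 = i e) ∧ (∀ e : N.Tedges, x e.1 = j e)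
      then ∏ v, T v x else 0

/-- `A` is an edge cut: removing the edges of `A` disconnects the inputs from the outputs
(there is a two-colouring of the vertices, constant on each remaining edge, with the ends
of remaining input edges coloured `false` and of remaining output edges coloured `true`). -/
def IsCut (A : Finset N.E) : Prop :=
  ∃ side : N.V → Bool,
    (∀ e ∈ N.Sedges, e ∉ A → ∀ v ∈ N.ends e, side v = false) ∧
    (∀ e ∈ N.Tedges, e ∉ A → ∀ v ∈ N.ends e, side v = true) ∧
    (∀ e : N.E, e ∉ A → ∀ u ∈ N.ends e, ∀ v ∈ N.ends e, side u = side v)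

/-- Quantum min-cut: the minimum over edge cuts of the product of the capacities. -/
noncomputable def qmc : ℕ :=
  sInf {n | ∃ A : Finset N.E, N.IsCut A ∧ n = ∏ e ∈ A, N.a e}

/-- Quantum max-flow: the maximum over (local) tensor assignments of the rank of the
contraction map `β`. -/
noncomputable def qmf : ℕ :=
  sSup {r | ∃ T : N.V → N.Assignment → ℂ, N.IsLocal T ∧ r = (N.contr T).rank}

end TensorNetwork

/-- Key lemma: the rank of the contraction is bounded by the capacity of any cut. -/
lemma TensorNetwork.rank_le_cut (N : TensorNetwork) (T : N.V → N.Assignment → ℂ)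
    (hT : N.IsLocal T) (A : Finset N.E) (hA : N.IsCut A) :
    (N.contr T).rank ≤ ∏ e ∈ A, N.a e := by
  classical
  obtain ⟨side, hSe, hTe, hconst⟩ := hA
  -- the "side" of an edge
  set es : N.E → Prop := fun e => e ∈ N.Tedges ∨ ∃ v ∈ N.ends e, side v = true with hes
  let Z := ∀ e : {e // e ∈ A}, Fin (N.a e.1)
  let YF := ∀ e : {e // e ∉ A ∧ ¬ es e}, Fin (N.a e.1)
  let YT := ∀ e : {e // e ∉ A ∧ es e}, Fin (N.a e.1)
  let glue : Z → YF → YT → N.Assignment := fun z yF yT e =>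
    if h : e ∈ A then z ⟨e, h⟩ else if h2 : es e then yT ⟨e, h, h2⟩ else yF ⟨e, h, h2⟩
  let dF : YF := fun e => ⟨0, N.a_pos e.1⟩
  let dT : YT := fun e => ⟨0, N.a_pos e.1⟩
  -- S-edges are not true-side
  have hSns : ∀ e ∈ N.Sedges, e ∉ A → ¬ es e := by
    rintro e he hA' (h1 | ⟨v, hv, hvt⟩)
    · exact (Finset.disjoint_left.mp N.hdisj he h1).elim
    · have := hSe e he hA' v hv
      simp [this] at hvt
  have hglueS : ∀ (z : Z) (yF : YF) (yT : YT) (e : N.E), e ∈ N.Sedges →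
      glue z yF yT e = glue z yF dT e := by
    intro z yF yT e he
    by_cases h : e ∈ A
    · simp only [glue, dif_pos h]
    · simp only [glue, dif_neg h, dif_neg (hSns e he h)]
  have hglueT : ∀ (z : Z) (yF : YF) (yT : YT) (e : N.E), e ∈ N.Tedges →
      glue z yF yT e = glue z dF yT e := by
    intro z yF yT e he
    by_cases h : e ∈ A
    · simp only [glue, dif_pos h]
    · have : es e := Or.inl he
      simp only [glue, dif_neg h, dif_pos this]
  -- vertices on the false side only see false-side / cut edges
  have hvF : ∀ (z : Z) (yF : YF) (yT : YT) (v : N.V), side v = false →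
      T v (glue z yF yT) = T v (glue z yF dT) := by
    intro z yF yT v hv
    apply hT
    intro e hve
    by_cases h : e ∈ A
    · simp only [glue, dif_pos h]
    · have hnes : ¬ es e := by
        rintro (h1 | ⟨w, hw, hwt⟩)
        · have := hTe e h1 h v hve; simp [this] at hv
        · have := hconst e h v hve w hw; rw [hv, hwt] at this; exact absurd this (by simp)
      simp only [glue, dif_neg h, dif_neg hnes]
  have hvT : ∀ (z : Z) (yF : YF) (yT : YT) (v : N.V), side v = true →
      T v (glue z yF yT) = T v (glue z dF yT) := by
    intro z yF yT v hv
    apply hT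
    intro e hve
    by_cases h : e ∈ A
    · simp only [glue, dif_pos h]
    · have hesE : es e := Or.inr ⟨v, hve, hv⟩
      simp only [glue, dif_neg h, dif_pos hesE]
  -- the factorization matrices
  let Lmat : Matrix N.SIx Z ℂ := fun i z => ∑ yF : YF,
    if (∀ e : N.Sedges, glue z yF dT e.1 = i e) then
      ∏ v ∈ Finset.univ.filter (fun v => side v = false), T v (glue z yF dT) else 0
  let Rmat : Matrix Z N.TIx ℂ := fun z j => ∑ yT : YT,
    if (∀ e : N.Tedges, glue z dF yT e.1 = j e) then
      ∏ v ∈ Finset.univ.filter (fun v => side v = true), T v (glue z dF yT) else 0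
  -- the reindexing equivalence
  let eqv : Z × YF × YT ≃ N.Assignment :=
    { toFun := fun p => glue p.1 p.2.1 p.2.2
      invFun := fun x => (fun e => x e.1, fun e => x e.1, fun e => x e.1)
      left_inv := by
        rintro ⟨z, yF, yT⟩
        refine Prod.ext ?_ (Prod.ext ?_ ?_)
        · funext e; simp only [glue, dif_pos e.2]
        · funext e; simp only [glue, dif_neg e.2.1, dif_neg e.2.2]
        · funext e; simp only [glue, dif_neg e.2.1, dif_pos e.2.2]
      right_inv := by
        intro x; funext e
        by_cases h : e ∈ A
        · simp only [glue, dif_pos h]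
        · by_cases h2 : es e
          · simp only [glue, dif_neg h, dif_pos h2]
          · simp only [glue, dif_neg h, dif_neg h2] }
  have key : N.contr T = Lmat * Rmat := by
    ext i j
    rw [Matrix.mul_apply]
    simp only [Lmat, Rmat]
    unfold TensorNetwork.contr
    rw [← Equiv.sum_comp eqv (fun x => if (∀ e : N.Sedges, x e.1 = i e) ∧
      (∀ e : N.Tedges, x e.1 = j e) then ∏ v, T v x else 0)]
    rw [Fintype.sum_prod_type]
    refine Finset.sum_congr rfl fun z _ => ?_
    rw [Finset.sum_mul_sum, Fintype.sum_prod_type]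
    refine Finset.sum_congr rfl fun yF _ => ?_
    refine Finset.sum_congr rfl fun yT _ => ?_
    show (if (∀ e : N.Sedges, glue z yF yT e.1 = i e) ∧
      (∀ e : N.Tedges, glue z yF yT e.1 = j e) then ∏ v, T v (glue z yF yT) else 0) = _
    have hcS : (∀ e : N.Sedges, glue z yF yT e.1 = i e) ↔
        (∀ e : N.Sedges, glue z yF dT e.1 = i e) := by
      refine forall_congr' fun e => ?_
      rw [hglueS z yF yT e.1 e.2]
    have hcT : (∀ e : N.Tedges, glue z yF yT e.1 = j e) ↔
        (∀ e : N.Tedges, glue z dF yT e.1 = j e) := by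
      refine forall_congr' fun e => ?_
      rw [hglueT z yF yT e.1 e.2]
    have hprod : (∏ v, T v (glue z yF yT)) =
        (∏ v ∈ Finset.univ.filter (fun v => side v = false), T v (glue z yF dT)) *
        (∏ v ∈ Finset.univ.filter (fun v => side v = true), T v (glue z dF yT)) := by
      rw [← Finset.prod_filter_mul_prod_filter_not Finset.univ (fun v => side v = false)
        (fun v => T v (glue z yF yT))]
      congr 1
      · refine Finset.prod_congr rfl fun v hv => ?_
        exact hvF z yF yT v (Finset.mem_filter.mp hv).2
      · have hfilter : Finset.univ.filter (fun v => ¬ side v = false) =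
            Finset.univ.filter (fun v => side v = true) := by
          ext v; simp [Bool.not_eq_false]
        rw [hfilter]
        refine Finset.prod_congr rfl fun v hv => ?_
        exact hvT z yF yT v (Finset.mem_filter.mp hv).2
    by_cases h1 : (∀ e : N.Sedges, glue z yF dT e.1 = i e)
    · by_cases h2 : (∀ e : N.Tedges, glue z dF yT e.1 = j e)
      · rw [if_pos ⟨hcS.mpr h1, hcT.mpr h2⟩, if_pos h1, if_pos h2, hprod]
      · rw [if_neg (fun hc => h2 (hcT.mp hc.2)), if_neg h2, mul_zero]
    · rw [if_neg (fun hc => h1 (hcS.mp hc.1)), if_neg h1, zero_mul]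
  calc (N.contr T).rank = (Lmat * Rmat).rank := by rw [key]
    _ ≤ Lmat.rank := Matrix.rank_mul_le_left Lmat Rmat
    _ ≤ Fintype.card Z := Matrix.rank_le_card_width Lmat
    _ = ∏ e ∈ A, N.a e := by
        rw [show (Fintype.card Z) = ∏ e : {e // e ∈ A}, N.a e.1 by
          simp [Z, Fintype.card_pi]]
        exact Finset.prod_coe_sort A N.a

/-- for any tensor network, `QMF(G,a) ≤ QMC(G,a)`. -/
theorem qmf_le_qmc (N : TensorNetwork) : N.qmf ≤ N.qmc := by
  classical
  have hne : {n | ∃ A : Finset N.E, N.IsCut A ∧ n = ∏ e ∈ A, N.a e}.Nonempty := by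
    refine ⟨∏ e ∈ Finset.univ, N.a e, Finset.univ, ⟨fun _ => true, ?_, ?_, ?_⟩, rfl⟩ <;>
      simp
  have hmem := Nat.sInf_mem hne
  obtain ⟨A₀, hcut, hqmc⟩ := hmem
  refine csSup_le ?_ ?_
  · exact ⟨(N.contr (fun _ _ => 0)).rank, fun _ _ => 0, fun v x y _ => rfl, rfl⟩
  · rintro r ⟨T, hT, rfl⟩
    rw [show N.qmc = ∏ e ∈ A₀, N.a e from hqmc]
    exact N.rank_le_cut T hT A₀ hcut
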